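/- arXiv:1104.3533 — 3 statements merged into one kernel-verified Lean document; each statement's English description precedes it below -/
import Mathlib

section
/- Let x be a reduced expression for w ∈ W, factored as x = a (s) b with s ∈ S, let j = ℓ(a) + 1, let x' = a b be the expression obtained by deleting the j-th letter, and let w' be the product of x'. Let θ̄(x) = (θ_1, …, θ_{ℓ(w)}) be the root sequence of x. If d is the number of indices k with 1 ≤ k < j such that s_{θ_j}(θ_k) ∈ Φ⁻, then ℓ(w') = ℓ(w) − 2d − 1. In particular, x' is a reduced expression for w' if and only if s_{θ_j}(θ_k) ∈ Φ⁺ for every k with 1 ≤ k < j. -/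
/-!
Setup: a Coxeter system `cs : CoxeterSystem M W`, a real vector space `V` with a basis
`e : Basis B ℝ V` of simple roots, a symmetric bilinear form `BF` with
`BF (e i) (e j) = -cos (π / M i j)` (the convention `M i j = 0` means `∞`, and division by
zero in `ℝ` gives `-cos 0 = -1`), and the geometric representation `ρ : W →* (V →ₗ[ℝ] V)`
determined by `ρ (s i) v = v - 2 ⟪α_i, v⟫ • α_i`.
-/

variable {B : Type*} {W : Type*} [Group W] {V : Type*} [AddCommGroup V] [Module ℝ V]

/-- The root system `Φ = {w • α_i}`. -/
def Phi (ρ : W →* V →ₗ[ℝ] V) (e : Module.Basis B ℝ V) : Set V :=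
  {v | ∃ (w : W) (i : B), v = ρ w (e i)}

/-- The positive system `Φ⁺`: roots that are nonnegative combinations of the simple roots. -/
def PhiPos (ρ : W →* V →ₗ[ℝ] V) (e : Module.Basis B ℝ V) : Set V :=
  {v | v ∈ Phi ρ e ∧ ∀ i : B, (0 : ℝ) ≤ e.repr v i}

/-- The negative system `Φ⁻ = -Φ⁺`. -/
def PhiNeg (ρ : W →* V →ₗ[ℝ] V) (e : Module.Basis B ℝ V) : Set V :=
  {v | -v ∈ PhiPos ρ e}

/-- The inversion set `Φ(w) = Φ⁺ ∩ w⁻¹ Φ⁻`. -/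
def InvSet (ρ : W →* V →ₗ[ℝ] V) (e : Module.Basis B ℝ V) (w : W) : Set V :=
  {v | v ∈ PhiPos ρ e ∧ ρ w v ∈ PhiNeg ρ e}

/-- The root sequence `θ̄(x)` of a word `x = (s_1, …, s_n)`:
`θ_k = s_n ⋯ s_{k+1} (α_{s_k})`. -/
noncomputable def rootSeq {M : CoxeterMatrix B} (cs : CoxeterSystem M W) (ρ : W →* V →ₗ[ℝ] V)
    (e : Module.Basis B ℝ V) : List B → List V
  | [] => []
  | i :: t => ρ (cs.wordProd t)⁻¹ (e i) :: rootSeq cs ρ e t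

/-- The data `(e, BF, ρ)` forms the geometric representation of the Coxeter system `cs`. -/
def IsGeometricRep {M : CoxeterMatrix B} (cs : CoxeterSystem M W) (e : Module.Basis B ℝ V)
    (BF : LinearMap.BilinForm ℝ V) (ρ : W →* V →ₗ[ℝ] V) : Prop :=
  (∀ u v : V, BF u v = BF v u) ∧
  (∀ i j : B, BF (e i) (e j) = - Real.cos (Real.pi / (M i j : ℝ))) ∧
  (∀ (i : B) (v : V), ρ (cs.simple i) v = v - (2 * BF (e i) v) • e i)


/-- The reflection `s_α` in a root `α`, acting on `V` by `s_α(v) = v - 2 B(v,α) α`. -/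
def reflVec (BF : LinearMap.BilinForm ℝ V) (α v : V) : V :=
  v - (2 * BF v α) • α


/-!
Deleting the letter `s` turns the root sequence `θ̄(x) = (θ₁, …, θ_{j-1}, θ_j, …)` into
`θ̄(x') = (s_{θ_j} θ₁, …, s_{θ_j} θ_{j-1}, θ_{j+1}, …)`. Building a word from the right, each new
letter raises or lowers the length by one according as its root is positive or negative, so
`|ω| = ℓ(ω) + 2 · #{negative roots in θ̄(ω)}`. For `x'` the roots coming from the reduced tail `b`
are positive, and the count is exactly `d`.

The sign rule is the classical fact that `ℓ(w s) > ℓ(w)` forces `w(α_s) > 0`, proved by induction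
on `ℓ(w)`: take a right descent `t ≠ s` of `w` and strip letters `s, t` off the right of `w` until
reaching `v` with `vα_s, vα_t > 0`. The stripped alternating word has length `k < m = m_{st}` and
sends `α_s` to a combination of `α_s, α_t` with coefficients the Chebyshev values
`U_k(cos (π/m)) = sin ((k+1)π/m) / sin (π/m)` and `U_{k-1}(cos (π/m))`, both nonnegative.
-/

open Polynomial.Chebyshev Real CoxeterSystem

theorem Polynomial.Chebyshev.U_eval_cos_pi_div_nonneg {m : ℕ} {n : ℤ} (hn : -1 ≤ n)
    (hnm : n + 1 ≤ m ∨ m = 0) : 0 ≤ (U ℝ n).eval (cos (π / m)) := by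
  rcases hnm with hnm | rfl
  · obtain rfl | rfl | hn1 : n = -1 ∨ n = 0 ∨ 1 ≤ n := by omega
    · simp
    · simp
    have hm : (2 : ℝ) ≤ m := by exact_mod_cast (by omega : (2 : ℤ) ≤ m)
    have hsin : 0 < sin (π / m) :=
      sin_pos_of_pos_of_lt_pi (by positivity) (div_lt_self pi_pos (by linarith))
    refine nonneg_of_mul_nonneg_left ?_ hsin
    rw [U_real_cos]
    have hnm' : (n : ℝ) + 1 ≤ m := by exact_mod_cast hnm
    refine sin_nonneg_of_nonneg_of_le_pi (by positivity) ?_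
    calc ((n : ℝ) + 1) * (π / m) ≤ m * (π / m) := by gcongr
      _ = π := by field_simp
  · have : (0 : ℝ) ≤ n + 1 := by exact_mod_cast (by omega : (0 : ℤ) ≤ n + 1)
    simpa using this

theorem CoxeterSystem.length_mul_wordProd_le {M : CoxeterMatrix B} (cs : CoxeterSystem M W)
    (w : W) (ω : List B) : cs.length (w * cs.wordProd ω) ≤ cs.length w + ω.length :=
  (cs.length_mul_le _ _).trans (Nat.add_le_add_left (cs.length_wordProd_le ω) _)

theorem CoxeterSystem.length_mul_wordProd_braidWord_mul_simple_lt {M : CoxeterMatrix B}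
    (cs : CoxeterSystem M W) (v : W) (a t : B) (hm : M a t ≠ 0) :
    cs.length (v * cs.wordProd (braidWord M a t) * cs.simple a) < cs.length v + M a t := by
  obtain ⟨m, hm⟩ := Nat.exists_eq_succ_of_ne_zero hm
  have hbraid : cs.wordProd (braidWord M a t)
      = cs.wordProd (alternatingWord a t m) * cs.simple a := by
    rw [cs.wordProd_braidWord_eq, braidWord, M.symmetric, hm, alternatingWord_succ,
      cs.wordProd_concat]
  rw [hbraid, ← mul_assoc, cs.simple_mul_simple_cancel_right, hm]
  have := cs.length_mul_wordProd_le v (alternatingWord a t m)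
  rw [length_alternatingWord] at this
  omega

theorem disjoint_phiPos_phiNeg (ρ : W →* V →ₗ[ℝ] V) (e : Module.Basis B ℝ V) :
    Disjoint (PhiPos ρ e) (PhiNeg ρ e) := by
  rw [Set.disjoint_left]
  rintro _ ⟨⟨w, i, rfl⟩, hpos⟩ ⟨-, hneg⟩
  have hzero : ρ w (e i) = 0 := e.repr.injective <| Finsupp.ext fun j => by
    have := hneg j
    rw [map_neg, Finsupp.neg_apply] at this
    simp only [map_zero, Finsupp.zero_apply]
    linarith [hpos j]
  have : e i = 0 := by
    simpa [← Module.End.mul_apply, ← map_mul] using congrArg (ρ w⁻¹) hzero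
  exact e.ne_zero i this

section RootSequence

variable {M : CoxeterMatrix B} {cs : CoxeterSystem M W} {e : Module.Basis B ℝ V}
  {ρ : W →* V →ₗ[ℝ] V}

theorem mem_phi_of_mem_rootSeq {ω : List B} {v : V} (hv : v ∈ rootSeq cs ρ e ω) :
    v ∈ Phi ρ e := by
  induction ω with
  | nil => simp [rootSeq] at hv
  | cons i ω ih =>
    rcases List.mem_cons.mp hv with rfl | hv
    exacts [⟨_, i, rfl⟩, ih hv]

theorem length_rootSeq (ω : List B) : (rootSeq cs ρ e ω).length = ω.length := by
  induction ω with
  | nil => rfl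
  | cons i ω ih => simp [rootSeq, ih]

theorem rootSeq_append (l ω : List B) :
    rootSeq cs ρ e (l ++ ω)
      = (rootSeq cs ρ e l).map (ρ (cs.wordProd ω)⁻¹) ++ rootSeq cs ρ e ω := by
  induction l with
  | nil => rfl
  | cons i l ih =>
    simp only [List.cons_append, rootSeq, ih, List.map_cons, cs.wordProd_append, mul_inv_rev,
      map_mul, Module.End.mul_apply]

theorem getD_rootSeq_append_cons (l₁ l₂ : List B) (s : B) :
    (rootSeq cs ρ e (l₁ ++ s :: l₂)).getD l₁.length 0 = ρ (cs.wordProd l₂)⁻¹ (e s) := by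
  rw [rootSeq_append, List.getD_append_right _ _ _ _ (by simp [length_rootSeq])]
  simp [length_rootSeq, rootSeq]

end RootSequence

namespace IsGeometricRep

variable {M : CoxeterMatrix B} {cs : CoxeterSystem M W} {e : Module.Basis B ℝ V}
  {BF : LinearMap.BilinForm ℝ V} {ρ : W →* V →ₗ[ℝ] V}

theorem bf_self (hgeo : IsGeometricRep cs e BF ρ) (i : B) : BF (e i) (e i) = 1 := by
  simp [hgeo.2.1]

theorem rho_simple_apply_self (hgeo : IsGeometricRep cs e BF ρ) (i : B) :
    ρ (cs.simple i) (e i) = -e i := by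
  rw [hgeo.2.2, hgeo.bf_self]
  module

theorem rho_simple_apply_add (hgeo : IsGeometricRep cs e BF ρ) (i i' : B) (p q : ℝ) :
    ρ (cs.simple i) (p • e i' + q • e i)
      = p • e i' + (2 * cos (π / M i i') * p - q) • e i := by
  rw [hgeo.2.2]
  simp only [map_add, map_smul, smul_eq_mul]
  rw [hgeo.bf_self, hgeo.2.1 i i']
  module

theorem bf_rho_apply (hgeo : IsGeometricRep cs e BF ρ) (w : W) (u v : V) :
    BF (ρ w u) (ρ w v) = BF u v := by
  induction w using cs.simple_induction generalizing u v with
  | simple i =>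
    rw [hgeo.2.2, hgeo.2.2]
    simp only [map_sub, map_smul, LinearMap.sub_apply, LinearMap.smul_apply, smul_eq_mul,
      hgeo.bf_self, hgeo.1 u (e i)]
    ring
  | one => simp
  | mul w₁ w₂ h₁ h₂ => rw [map_mul, Module.End.mul_apply, Module.End.mul_apply, h₁, h₂]

theorem reflVec_rho_apply (hgeo : IsGeometricRep cs e BF ρ) (u : W) (i : B) (v : V) :
    reflVec BF (ρ u (e i)) v = ρ (u * cs.simple i * u⁻¹) v := by
  have hbf : BF v (ρ u (e i)) = BF (e i) (ρ u⁻¹ v) := by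
    rw [hgeo.1, ← hgeo.bf_rho_apply u⁻¹]
    simp [← Module.End.mul_apply, ← map_mul]
  simp only [map_mul, Module.End.mul_apply, hgeo.2.2, map_sub, map_smul, reflVec, hbf]
  simp [← Module.End.mul_apply, ← map_mul]

theorem rho_alternatingWord_apply (hgeo : IsGeometricRep cs e BF ρ) (a t : B) (j : ℕ) :
    ρ (cs.wordProd (alternatingWord a t j)) (e a) =
      if Even j then
        (U ℝ j).eval (cos (π / M a t)) • e a + (U ℝ (j - 1 : ℤ)).eval (cos (π / M a t)) • e t
      else
        (U ℝ (j - 1 : ℤ)).eval (cos (π / M a t)) • e a + (U ℝ j).eval (cos (π / M a t)) • e t := by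
  induction j with
  | zero => simp [alternatingWord]
  | succ j ih =>
    have hU : (U ℝ (j + 1 : ℕ)).eval (cos (π / M a t)) = 2 * cos (π / M a t)
        * (U ℝ j).eval (cos (π / M a t)) - (U ℝ (j - 1 : ℤ)).eval (cos (π / M a t)) := by
      simp [U_add_one]
    have hj1 : ((j + 1 : ℕ) : ℤ) - 1 = j := by omega
    rw [alternatingWord_succ', cs.wordProd_cons, map_mul, Module.End.mul_apply, ih]
    rcases Nat.even_or_odd j with hj | hj
    · have hj' : ¬Even (j + 1) := by simpa [Nat.even_add_one] using hj
      rw [if_pos hj, if_pos hj, if_neg hj', hgeo.rho_simple_apply_add, M.symmetric t a, hU, hj1]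
    · have hj' : Even (j + 1) := Nat.even_add_one.mpr (Nat.not_even_iff_odd.mpr hj)
      rw [if_neg (Nat.not_even_iff_odd.mpr hj), if_neg (Nat.not_even_iff_odd.mpr hj), if_pos hj',
        add_comm, hgeo.rho_simple_apply_add, hU, hj1, add_comm]

theorem exists_nonneg_rho_alternatingWord_apply (hgeo : IsGeometricRep cs e BF ρ) {a t : B}
    {j : ℕ} (hj : j + 1 ≤ M a t ∨ M a t = 0) :
    ∃ p q : ℝ, 0 ≤ p ∧ 0 ≤ q ∧
      ρ (cs.wordProd (alternatingWord a t j)) (e a) = p • e a + q • e t := by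
  have hU : 0 ≤ (U ℝ j).eval (cos (π / M a t)) :=
    U_eval_cos_pi_div_nonneg (by omega) (by exact_mod_cast hj)
  have hU' : 0 ≤ (U ℝ (j - 1 : ℤ)).eval (cos (π / M a t)) :=
    U_eval_cos_pi_div_nonneg (by omega) (by omega)
  rw [hgeo.rho_alternatingWord_apply]
  split_ifs
  exacts [⟨_, _, hU, hU', rfl⟩, ⟨_, _, hU', hU, rfl⟩]

theorem rho_mul_alternatingWord_apply_mem_phiPos_of_mem_phiPos
    (hgeo : IsGeometricRep cs e BF ρ) {a t : B} {j : ℕ} (hj : j + 1 ≤ M a t ∨ M a t = 0)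
    {v : W} (ha : ρ v (e a) ∈ PhiPos ρ e) (ht : ρ v (e t) ∈ PhiPos ρ e) :
    ρ (v * cs.wordProd (alternatingWord a t j)) (e a) ∈ PhiPos ρ e := by
  obtain ⟨p, q, hp, hq, h⟩ := hgeo.exists_nonneg_rho_alternatingWord_apply hj
  refine ⟨⟨_, a, rfl⟩, fun i => ?_⟩
  rw [map_mul, Module.End.mul_apply, h]
  simp only [map_add, map_smul, Finsupp.add_apply, Finsupp.smul_apply, smul_eq_mul]
  exact add_nonneg (mul_nonneg hp (ha.2 i)) (mul_nonneg hq (ht.2 i))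

/- Induction on `ℓ v`: if the letter `c` that would extend the alternating word on the left is a
descent of `v`, move it over; otherwise `v` has both `a` and `t` as ascents. The length hypothesis
rules out reaching the braid word, so the alternating word stays shorter than `M a t`. -/
theorem rho_mul_alternatingWord_apply_mem_phiPos_of_length_eq
    (hgeo : IsGeometricRep cs e BF ρ) {a t : B} (k : ℕ) (v : W)
    (hk : k + 1 ≤ M a t ∨ M a t = 0)
    (hpos : ∀ u : W, cs.length u < cs.length v + k + 1 → ∀ b, ¬cs.IsRightDescent u b →
      ρ u (e b) ∈ PhiPos ρ e)
    (h : cs.length (v * cs.wordProd (alternatingWord a t (k + 1)) * cs.simple a)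
      = cs.length v + k + 2) :
    ρ (v * cs.wordProd (alternatingWord a t (k + 1))) (e a) ∈ PhiPos ρ e := by
  induction hn : cs.length v using Nat.strong_induction_on generalizing v k with
  | _ n ih =>
  subst hn
  have hk' : k + 2 ≤ M a t ∨ M a t = 0 := by
    by_contra! hkM
    have := cs.length_mul_wordProd_braidWord_mul_simple_lt v a t (by omega)
    rw [braidWord, ← (by omega : k + 1 = M a t)] at this
    omega
  set c := if Even k then a else t
  set c' := if Even k then t else a
  have hc' : ¬cs.IsRightDescent v c' := by
    have hsplit : v * cs.wordProd (alternatingWord a t (k + 1)) * cs.simple a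
        = v * cs.simple c' * cs.wordProd ((alternatingWord a t k).concat a) := by
      rw [show alternatingWord a t (k + 1) = c' :: alternatingWord a t k from
        alternatingWord_succ' a t k, cs.wordProd_cons, cs.wordProd_concat]
      group
    have := cs.length_mul_wordProd_le (v * cs.simple c') ((alternatingWord a t k).concat a)
    rw [← hsplit, h, List.length_concat, length_alternatingWord] at this
    rw [CoxeterSystem.IsRightDescent]
    omega
  rcases cs.length_mul_simple v c with hc | hc
  · have hc : ¬cs.IsRightDescent v c := cs.not_isRightDescent_iff.mpr hc
    have hat : ¬cs.IsRightDescent v a ∧ ¬cs.IsRightDescent v t := by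
      by_cases hk : Even k <;> simp only [c, c', hk, if_true, if_false] at hc hc' <;> tauto
    exact hgeo.rho_mul_alternatingWord_apply_mem_phiPos_of_mem_phiPos hk'
      (hpos v (by omega) a hat.1) (hpos v (by omega) t hat.2)
  · have hstep : v * cs.simple c * cs.wordProd (alternatingWord a t (k + 2))
        = v * cs.wordProd (alternatingWord a t (k + 1)) := by
      have hext : alternatingWord a t (k + 2) = c :: alternatingWord a t (k + 1) := by
        rw [alternatingWord_succ']
        by_cases hk : Even k <;> simp [c, hk, Nat.even_add_one]
      rw [hext, cs.wordProd_cons, ← mul_assoc, cs.simple_mul_simple_cancel_right]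
    rw [← hstep]
    exact ih _ (by omega) (k + 1) _ hk' (fun u hu => hpos u (by omega))
      (by rw [hstep]; omega) rfl

theorem rho_apply_mem_phiPos (hgeo : IsGeometricRep cs e BF ρ) {w : W} {a : B}
    (h : ¬cs.IsRightDescent w a) : ρ w (e a) ∈ PhiPos ρ e := by
  induction hn : cs.length w using Nat.strong_induction_on generalizing w a with
  | _ n ih =>
  subst hn
  obtain rfl | hw := eq_or_ne w 1
  · classical
    refine ⟨⟨1, a, rfl⟩, fun i => ?_⟩
    rw [map_one, Module.End.one_apply, Module.Basis.repr_self, Finsupp.single_apply]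
    split_ifs <;> norm_num
  obtain ⟨t, ht⟩ := cs.exists_rightDescent_of_ne_one hw
  rw [cs.isRightDescent_iff] at ht
  rw [cs.not_isRightDescent_iff] at h
  have hwt : w * cs.simple t * cs.wordProd (alternatingWord a t 1) = w := by
    simp [alternatingWord]
  rw [← hwt]
  exact hgeo.rho_mul_alternatingWord_apply_mem_phiPos_of_length_eq 0 (w * cs.simple t)
    (by omega) (fun u hu b hb => ih _ (by omega) hb rfl) (by rw [hwt]; omega)

theorem rho_apply_mem_phiNeg (hgeo : IsGeometricRep cs e BF ρ) {w : W} {a : B}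
    (h : cs.IsRightDescent w a) : ρ w (e a) ∈ PhiNeg ρ e := by
  have hneg : -ρ w (e a) = ρ (w * cs.simple a) (e a) := by
    rw [map_mul, Module.End.mul_apply, hgeo.rho_simple_apply_self, map_neg]
  change -ρ w (e a) ∈ PhiPos ρ e
  rw [hneg]
  exact hgeo.rho_apply_mem_phiPos (cs.isRightDescent_iff_not_isRightDescent_mul.mp h)

theorem rho_apply_mem_phiNeg_iff (hgeo : IsGeometricRep cs e BF ρ) (w : W) (a : B) :
    ρ w (e a) ∈ PhiNeg ρ e ↔ cs.IsRightDescent w a :=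
  ⟨fun hneg => by_contra fun hd =>
    Set.disjoint_left.mp (disjoint_phiPos_phiNeg ρ e) (hgeo.rho_apply_mem_phiPos hd) hneg,
    hgeo.rho_apply_mem_phiNeg⟩

theorem mem_phiPos_iff_notMem_phiNeg (hgeo : IsGeometricRep cs e BF ρ) {v : V}
    (hv : v ∈ Phi ρ e) : v ∈ PhiPos ρ e ↔ v ∉ PhiNeg ρ e := by
  obtain ⟨w, a, rfl⟩ := hv
  rw [hgeo.rho_apply_mem_phiNeg_iff]
  exact ⟨fun hpos hd => Set.disjoint_left.mp (disjoint_phiPos_phiNeg ρ e) hpos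
    (hgeo.rho_apply_mem_phiNeg hd), hgeo.rho_apply_mem_phiPos⟩

open scoped Classical in
theorem length_eq_length_wordProd_add_countP_rootSeq (hgeo : IsGeometricRep cs e BF ρ)
    (ω : List B) : ω.length = cs.length (cs.wordProd ω)
      + 2 * (rootSeq cs ρ e ω).countP (fun v => decide (v ∈ PhiNeg ρ e)) := by
  induction ω with
  | nil => simp [rootSeq]
  | cons i ω ih =>
    rw [rootSeq, List.countP_cons, cs.wordProd_cons, List.length_cons]
    simp only [hgeo.rho_apply_mem_phiNeg_iff, cs.isRightDescent_inv_iff]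
    by_cases hd : cs.IsLeftDescent (cs.wordProd ω) i
    · simp only [hd, decide_true, if_true]
      have := cs.isLeftDescent_iff.mp hd
      omega
    · simp only [hd, decide_false, Bool.false_eq_true, if_false]
      have := cs.not_isLeftDescent_iff.mp hd
      omega

theorem rootSeq_append_eq_map_reflVec (hgeo : IsGeometricRep cs e BF ρ) (l₁ l₂ : List B)
    (s : B) : rootSeq cs ρ e (l₁ ++ l₂) = ((rootSeq cs ρ e (l₁ ++ s :: l₂)).take l₁.length).map
      (reflVec BF (ρ (cs.wordProd l₂)⁻¹ (e s))) ++ rootSeq cs ρ e l₂ := by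
  rw [rootSeq_append, rootSeq_append, List.take_left' (by simp [length_rootSeq]), List.map_map]
  congr 2
  ext v
  rw [Function.comp_apply, hgeo.reflVec_rho_apply, ← Module.End.mul_apply, ← map_mul,
    cs.wordProd_cons]
  group

end IsGeometricRep

open scoped Classical in
/-- Let `x = a (s) b` be a reduced expression for `w`, `j = ℓ(a) + 1`,
`x' = a b` (the `j`-th letter deleted) and `w' = φ(x')`. If `d` is the number of indices
`1 ≤ k < j` with `s_{θ_j}(θ_k) ∈ Φ⁻`, then `ℓ(w') = ℓ(w) − 2d − 1`; in particular `x'` is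
reduced iff `s_{θ_j}(θ_k) ∈ Φ⁺` for all `1 ≤ k < j`. -/
theorem length_delete_eq
    {M : CoxeterMatrix B} (cs : CoxeterSystem M W) (e : Module.Basis B ℝ V)
    (BF : LinearMap.BilinForm ℝ V) (ρ : W →* V →ₗ[ℝ] V)
    (hgeo : IsGeometricRep cs e BF ρ)
    (l₁ l₂ : List B) (s : B) (w : W)
    (hred : cs.IsReduced (l₁ ++ s :: l₂)) (hw : cs.wordProd (l₁ ++ s :: l₂) = w)
    (θj : V) (hθj : θj = (rootSeq cs ρ e (l₁ ++ s :: l₂)).getD l₁.length 0)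
    (w' : W) (hw' : cs.wordProd (l₁ ++ l₂) = w')
    (d : ℕ)
    (hd : d = ((rootSeq cs ρ e (l₁ ++ s :: l₂)).take l₁.length).countP
        (fun v => decide (reflVec BF θj v ∈ PhiNeg ρ e))) :
    cs.length w = cs.length w' + 2 * d + 1 ∧
      (cs.IsReduced (l₁ ++ l₂) ↔
        ∀ v ∈ (rootSeq cs ρ e (l₁ ++ s :: l₂)).take l₁.length,
          reflVec BF θj v ∈ PhiPos ρ e) := by
  rw [getD_rootSeq_append_cons] at hθj
  subst hw hw' hθj
  set θ := ρ (cs.wordProd l₂)⁻¹ (e s)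
  set A := (rootSeq cs ρ e (l₁ ++ s :: l₂)).take l₁.length
  have hsplit : rootSeq cs ρ e (l₁ ++ l₂) = A.map (reflVec BF θ) ++ rootSeq cs ρ e l₂ :=
    hgeo.rootSeq_append_eq_map_reflVec l₁ l₂ s
  have hl₂ : (rootSeq cs ρ e l₂).countP (fun v => decide (v ∈ PhiNeg ρ e)) = 0 := by
    have hred₂ : cs.IsReduced l₂ := by simpa using hred.drop (l₁.length + 1)
    have := hgeo.length_eq_length_wordProd_add_countP_rootSeq l₂
    rw [hred₂.eq] at this
    omega
  have hcount : (l₁ ++ l₂).length = cs.length (cs.wordProd (l₁ ++ l₂)) + 2 * d := by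
    rw [hgeo.length_eq_length_wordProd_add_countP_rootSeq (l₁ ++ l₂), hsplit, List.countP_append,
      hl₂, add_zero, hd, List.countP_map]
    rfl
  have hlen : cs.length (cs.wordProd (l₁ ++ s :: l₂)) = (l₁ ++ l₂).length + 1 := by
    rw [hred.eq]
    simp only [List.length_append, List.length_cons]
    omega
  refine ⟨by omega, ?_⟩
  have hreduced : cs.IsReduced (l₁ ++ l₂) ↔ d = 0 := by
    rw [CoxeterSystem.IsReduced]
    omega
  rw [hreduced, hd, List.countP_eq_zero]
  refine forall₂_congr fun v hv => ?_
  have hroot : reflVec BF θ v ∈ Phi ρ e :=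
    mem_phi_of_mem_rootSeq (hsplit ▸ List.mem_append_left _ (List.mem_map_of_mem hv))
  rw [decide_eq_true_iff, hgeo.mem_phiPos_iff_notMem_phiNeg hroot]
end

section
/- Let (W,S) be a Coxeter system and w ∈ W, and let s_1 ⋯ s_k be a reduced expression for w. Then w is fully covering (i.e. the number of reflections t with ℓ(wt) = ℓ(w) − 1 equals ℓ(w)) if and only if for every i with 1 ≤ i ≤ k, the expression s_1 ⋯ ŝ_i ⋯ s_k obtained by omitting s_i is reduced. -/
/-!
Strong exchange: if `t` is a reflection with `ℓ(w t) < ℓ(w)`, then `t` occurs in the right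
inversion sequence `t₁, …, t_k` of every word `s₁ ⋯ s_k` for `w`. For a reduced word the `tᵢ` are
`k` distinct reflections and `w tᵢ = s₁ ⋯ ŝᵢ ⋯ s_k`, so the reflections `t` with
`ℓ(w t) = ℓ(w) - 1` form a subset of `{t₁, …, t_k}`, which is all of it exactly when every
`s₁ ⋯ ŝᵢ ⋯ s_k` has length `k - 1`.

Strong exchange comes from the permutation representation of `W` on `W × ZMod 2` sending `s` to
`(t, ε) ↦ (s t s, ε + [t = s])`. It shows that the parity `η(w, t)` of the number of occurrences
of `t` in the right inversion sequence of a word for `w` depends only on `w`, and that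
`η(u v, t) = η(v, t) + η(u, v t v⁻¹)`. Hence `η(t, t) = 1` for every reflection `t`, and
`η(w, t) = η(t, t) + η(w t, t) = 1 + 0` when `ℓ(w t) < ℓ(w)`.
-/

namespace CoxeterSystem

open List

theorem alternatingWord_two_mul_succ {B : Type*} (i j : B) (n : ℕ) :
    alternatingWord i j (2 * (n + 1)) = i :: j :: alternatingWord i j (2 * n) := by
  rw [show 2 * (n + 1) = 2 * n + 1 + 1 by ring, alternatingWord_succ', alternatingWord_succ']
  simp

theorem prod_map_alternatingWord {B G : Type*} [Monoid G] (f : B → G) (i j : B) (n : ℕ) :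
    ((alternatingWord i j (2 * n)).map f).prod = (f i * f j) ^ n := by
  induction n with
  | zero => simp [alternatingWord]
  | succ n ih => rw [alternatingWord_two_mul_succ, map_cons, map_cons, prod_cons, prod_cons, ih,
      pow_succ', mul_assoc]

open scoped Classical

variable {B W : Type*} [Group W] {M : CoxeterMatrix B} (cs : CoxeterSystem M W)

theorem rightInvSeq_alternatingWord (i j : B) (n : ℕ) :
    cs.rightInvSeq (alternatingWord i j (2 * n)) =
      ((range (2 * n)).map fun k => (cs.simple j * cs.simple i) ^ k * cs.simple j).reverse := by
  induction n with
  | zero => simp [alternatingWord]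
  | succ n ih =>
    have hprod : cs.wordProd (alternatingWord i j (2 * n)) = (cs.simple i * cs.simple j) ^ n :=
      prod_map_alternatingWord _ i j n
    have hinv : ((cs.simple i * cs.simple j) ^ n)⁻¹ = (cs.simple j * cs.simple i) ^ n := by
      simp [← inv_pow]
    have hsemi : cs.simple j * (cs.simple i * cs.simple j) ^ n =
        (cs.simple j * cs.simple i) ^ n * cs.simple j :=
      (SemiconjBy.pow_right (by simp [SemiconjBy, mul_assoc]) n :
        SemiconjBy (cs.simple j) _ _)
    rw [alternatingWord_two_mul_succ, rightInvSeq, rightInvSeq, ih, wordProd_cons, hprod,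
      show 2 * (n + 1) = 2 * n + 1 + 1 by ring, range_succ, range_succ]
    simp only [map_append, map_cons, map_nil, append_assoc, reverse_append,
      reverse_cons, reverse_nil, nil_append, cons_append, cons.injEq, and_true]
    constructor
    · rw [mul_inv_rev, inv_simple, hinv, mul_assoc, mul_assoc, hsemi]
      group
    · rw [hinv, mul_assoc, hsemi, ← mul_assoc, ← pow_add, two_mul]

theorem even_count_rightInvSeq_braid (i j : B) (t : W) :
    Even ((cs.rightInvSeq (alternatingWord i j (2 * M i j))).count t) := by
  have hperiod : (cs.simple j * cs.simple i) ^ M i j = 1 := by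
    rw [← M.symmetric, cs.simple_mul_simple_pow]
  -- `k ↦ (s j * s i) ^ k * s j` has period `M i j`, so the sequence lists its first half twice
  rw [rightInvSeq_alternatingWord, count_reverse, two_mul, range_add, map_append, map_map,
    count_append]
  simp only [Function.comp_def, pow_add, hperiod, one_mul]
  exact ⟨_, rfl⟩

noncomputable def simplePerm (i : B) : Equiv.Perm (W × ZMod 2) :=
  Function.Involutive.toPerm
    (fun x => (cs.simple i * x.1 * cs.simple i, x.2 + if x.1 = cs.simple i then 1 else 0))
    (by
      rintro ⟨t, ε⟩
      have hconj : cs.simple i * (cs.simple i * t * cs.simple i) * cs.simple i = t := by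
        simp [← mul_assoc]
      have hfix : cs.simple i * t * cs.simple i = cs.simple i ↔ t = cs.simple i := by
        constructor
        · intro h; rw [← hconj, h]; simp
        · rintro rfl; simp
      simp only [hconj, hfix, Prod.mk.injEq, true_and, add_assoc]
      split_ifs <;> simp [CharTwo.add_self_eq_zero])

theorem simplePerm_apply (i : B) (t : W) (ε : ZMod 2) :
    cs.simplePerm i (t, ε) =
      (cs.simple i * t * cs.simple i, ε + if t = cs.simple i then 1 else 0) :=
  rfl

theorem prod_map_simplePerm_apply (ω : List B) (t : W) (ε : ZMod 2) :
    (ω.map cs.simplePerm).prod (t, ε) =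
      (cs.wordProd ω * t * (cs.wordProd ω)⁻¹, ε + (cs.rightInvSeq ω).count t) := by
  induction ω with
  | nil => simp
  | cons i ω ih =>
    have hfix : cs.wordProd ω * t * (cs.wordProd ω)⁻¹ = cs.simple i ↔
        (cs.wordProd ω)⁻¹ * cs.simple i * cs.wordProd ω = t := by
      constructor
      · intro h; rw [← h]; group
      · rintro rfl; group
    rw [map_cons, prod_cons, Equiv.Perm.mul_apply, ih, simplePerm_apply, if_congr hfix rfl rfl,
      wordProd_cons, rightInvSeq, count_cons]
    refine Prod.ext ?_ ?_
    · simp [mul_assoc]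
    · simp only [beq_iff_eq]
      split_ifs <;> simp [add_assoc]

theorem isLiftable_simplePerm : M.IsLiftable cs.simplePerm := by
  intro i j
  ext ⟨t, ε⟩ : 1
  rw [← prod_map_alternatingWord, prod_map_simplePerm_apply,
    show cs.wordProd (alternatingWord i j (2 * M i j)) = 1 from
      (prod_map_alternatingWord _ i j _).trans (cs.simple_mul_simple_pow i j),
    (ZMod.natCast_eq_zero_iff_even).mpr (cs.even_count_rightInvSeq_braid i j t)]
  simp

noncomputable def permRep : W →* Equiv.Perm (W × ZMod 2) :=
  cs.lift ⟨cs.simplePerm, cs.isLiftable_simplePerm⟩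

theorem permRep_wordProd (ω : List B) :
    cs.permRep (cs.wordProd ω) = (ω.map cs.simplePerm).prod := by
  rw [wordProd, map_list_prod, map_map]
  congr 2
  ext i : 1
  exact cs.lift_apply_simple cs.isLiftable_simplePerm i

noncomputable def inversionParity (w t : W) : ZMod 2 :=
  (cs.permRep w (t, 0)).2

theorem inversionParity_wordProd (ω : List B) (t : W) :
    cs.inversionParity (cs.wordProd ω) t = (cs.rightInvSeq ω).count t := by
  simp [inversionParity, permRep_wordProd, prod_map_simplePerm_apply]

theorem permRep_apply (w t : W) (ε : ZMod 2) :
    cs.permRep w (t, ε) = (w * t * w⁻¹, ε + cs.inversionParity w t) := by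
  obtain ⟨ω, rfl⟩ := cs.wordProd_surjective w
  simp [inversionParity, permRep_wordProd, prod_map_simplePerm_apply]

theorem inversionParity_mul (u v t : W) :
    cs.inversionParity (u * v) t = cs.inversionParity v t + cs.inversionParity u (v * t * v⁻¹) := by
  rw [inversionParity, map_mul, Equiv.Perm.mul_apply, permRep_apply, permRep_apply, zero_add]

theorem inversionParity_self {t : W} (ht : cs.IsReflection t) : cs.inversionParity t t = 1 := by
  obtain ⟨v, i, rfl⟩ := ht
  have hconj : v⁻¹ * (v * cs.simple i * v⁻¹) * v⁻¹⁻¹ = cs.simple i := by group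
  have hsimple : cs.inversionParity (cs.simple i) (cs.simple i) = 1 := by
    simp [inversionParity, permRep, cs.lift_apply_simple, simplePerm_apply]
  have hone : cs.inversionParity (v * v⁻¹) (v * cs.simple i * v⁻¹) = 0 := by
    simp [inversionParity]
  rw [inversionParity_mul, hconj] at hone
  have hvs := cs.inversionParity_mul v (cs.simple i) (cs.simple i)
  rw [show cs.simple i * cs.simple i * (cs.simple i)⁻¹ = cs.simple i by simp, hsimple] at hvs
  rw [inversionParity_mul, hconj, hvs]
  linear_combination hone

theorem inversionParity_eq_zero_of_length_lt {w t : W} (h : cs.length w < cs.length (w * t)) :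
    cs.inversionParity w t = 0 := by
  obtain ⟨ω, hω, rfl⟩ := cs.exists_isReduced w
  rw [inversionParity_wordProd, count_eq_zero_of_not_mem fun hmem => ?_, Nat.cast_zero]
  exact (cs.isRightInversion_of_mem_rightInvSeq hω hmem).2.not_gt h

theorem inversionParity_eq_one {w t : W} (ht : cs.IsRightInversion w t) :
    cs.inversionParity w t = 1 := by
  have hwtt : w * t * t = w := by rw [mul_assoc, ht.1.mul_self, mul_one]
  calc cs.inversionParity w t
      = cs.inversionParity t t + cs.inversionParity (w * t) (t * t * t⁻¹) := by
        rw [← inversionParity_mul, hwtt]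
    _ = 1 := by
        rw [cs.inversionParity_self ht.1, mul_inv_cancel_right,
          cs.inversionParity_eq_zero_of_length_lt (by rw [hwtt]; exact ht.2), add_zero]

/-- The strong exchange property. -/
theorem mem_rightInvSeq_of_isRightInversion (ω : List B) {t : W}
    (ht : cs.IsRightInversion (cs.wordProd ω) t) : t ∈ cs.rightInvSeq ω := by
  have hodd := cs.inversionParity_eq_one ht
  rw [inversionParity_wordProd] at hodd
  exact count_pos_iff.mp (Nat.pos_of_ne_zero fun h => by simp [h] at hodd)

theorem isReduced_eraseIdx_iff {l : List B} (hl : cs.IsReduced l) {i : ℕ} (hi : i < l.length) :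
    cs.IsReduced (l.eraseIdx i) ↔
      cs.length (cs.wordProd l * (cs.rightInvSeq l)[i]'(by simpa using hi)) + 1 =
        cs.length (cs.wordProd l) := by
  rw [IsReduced, ← getD_eq_getElem _ 1, wordProd_mul_getD_rightInvSeq, hl.eq,
    ← length_eraseIdx_add_one hi, Nat.add_right_cancel_iff]

end CoxeterSystem

/-- Let `s_1 ⋯ s_k` be a reduced expression for `w`.  Then `w` is fully
covering (the number of reflections `t` with `ℓ(wt) = ℓ(w) − 1` equals `ℓ(w)`) if and only
if omitting any single letter from the reduced expression yields a reduced expression. -/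
theorem fullyCovering_iff_eraseIdx_reduced
    {B : Type*} {W : Type*} [Group W] {M : CoxeterMatrix B} (cs : CoxeterSystem M W)
    (w : W) (l : List B) (hred : cs.IsReduced l) (hw : cs.wordProd l = w) :
    Set.ncard {t : W | cs.IsReflection t ∧ cs.length (w * t) + 1 = cs.length w}
        = cs.length w ↔
      ∀ i : ℕ, i < l.length → cs.IsReduced (l.eraseIdx i) := by
  classical
  subst hw
  set A := {t : W | cs.IsReflection t ∧
    cs.length (cs.wordProd l * t) + 1 = cs.length (cs.wordProd l)}
  set R : Set W := ↑(cs.rightInvSeq l).toFinset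
  have hAR : A ⊆ R := fun t ⟨hrefl, hlen⟩ => List.mem_toFinset.mpr
    (cs.mem_rightInvSeq_of_isRightInversion l ⟨hrefl, by omega⟩)
  have hcardR : R.ncard = cs.length (cs.wordProd l) := by
    rw [Set.ncard_coe_finset, List.toFinset_card_of_nodup hred.nodup_rightInvSeq,
      cs.length_rightInvSeq, hred.eq]
  calc A.ncard = cs.length (cs.wordProd l) ↔ R ⊆ A := by
        rw [← hcardR]
        exact ⟨fun h => (Set.eq_of_subset_of_ncard_le hAR h.ge (Finset.finite_toSet _)).ge,
          fun h => by rw [hAR.antisymm h]⟩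
    _ ↔ ∀ i : ℕ, i < l.length → cs.IsReduced (l.eraseIdx i) := by
        simp only [R, Set.subset_def, Finset.mem_coe, List.mem_toFinset,
          List.forall_mem_iff_getElem, cs.length_rightInvSeq]
        refine forall₂_congr fun i hi => ?_
        rw [cs.isReduced_eraseIdx_iff hred hi]
        exact and_iff_right (cs.isReflection_of_mem_rightInvSeq l (List.getElem_mem _))
end

section
/- For all n, i, j ∈ ℤ and all a ∈ ℝ, U_i(a)·U_{n+i+j}(a) + U_j(a)·U_n(a) = U_{i+j}(a)·U_{n+i}(a). -/
/-!
The solutions of `s (n + 2) = c * s (n + 1) - s n` on `ℤ` form a shift-invariant module in which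
a solution is determined by two consecutive values. Both sides of the identity are solutions
in `n`, so it suffices to check `n = 0`, which is trivial, and `n = 1`. As functions of `j`, both
sides of the case `n = 1` are again solutions, which reduces it to `j = 0`, again trivial, and
`j = 1`, which is Cassini's identity `U_{i+2} U_i - U_{i+1}² = -1`: the Casoratian
`s (n + 2) * s n - s (n + 1) ^ 2` of any solution is constant.
-/

def SolvesChebyshevRec {R : Type*} [CommRing R] (c : R) (s : ℤ → R) : Prop :=
  ∀ n, s (n + 2) = c * s (n + 1) - s n

namespace SolvesChebyshevRec

variable {R : Type*} [CommRing R] {c : R} {s t : ℤ → R}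

theorem comp_add_right (hs : SolvesChebyshevRec c s) (k : ℤ) :
    SolvesChebyshevRec c (fun n => s (n + k)) := fun n => by
  simpa only [add_right_comm] using hs (n + k)

theorem const_mul (hs : SolvesChebyshevRec c s) (a : R) :
    SolvesChebyshevRec c (fun n => a * s n) := fun n => by
  beta_reduce; linear_combination a * hs n

theorem add (hs : SolvesChebyshevRec c s) (ht : SolvesChebyshevRec c t) :
    SolvesChebyshevRec c (fun n => s n + t n) := fun n => by
  beta_reduce; linear_combination hs n + ht n

theorem eq_of_eq_zero_of_eq_one (hs : SolvesChebyshevRec c s) (ht : SolvesChebyshevRec c t)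
    (h0 : s 0 = t 0) (h1 : s 1 = t 1) : s = t := by
  have consecutive : ∀ n : ℤ, s n = t n ∧ s (n + 1) = t (n + 1) := by
    intro n
    induction n using Int.induction_on with
    | zero => exact ⟨h0, h1⟩
    | succ k ih =>
      refine ⟨ih.2, ?_⟩
      rw [add_assoc, one_add_one_eq_two, hs, ht, ih.1, ih.2]
    | pred k ih =>
      have hs' := hs (-k - 1)
      have ht' := ht (-k - 1)
      rw [sub_add_cancel] at hs' ht' ⊢
      refine ⟨?_, ih.1⟩
      rw [show -(k : ℤ) - 1 + 2 = -k + 1 by ring] at hs' ht'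
      linear_combination hs' - ht' - ih.2 + c * ih.1
  exact funext fun n => (consecutive n).1

theorem casoratian_periodic (hs : SolvesChebyshevRec c s) :
    Function.Periodic (fun n => s (n + 2) * s n - s (n + 1) ^ 2) 1 := fun n => by
  beta_reduce
  have h := hs (n + 1)
  rw [show n + 1 + 2 = n + 3 by ring, show n + 1 + 1 = n + 2 by ring] at h ⊢
  linear_combination s (n + 1) * h - s (n + 2) * hs n

theorem casoratian_eq (hs : SolvesChebyshevRec c s) (n : ℤ) :
    s (n + 2) * s n - s (n + 1) ^ 2 = s 2 * s 0 - s 1 ^ 2 := by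
  simpa using hs.casoratian_periodic.int_mul_eq n

theorem casoratian_eq_neg_one (hs : SolvesChebyshevRec c s) (h0 : s 0 = 0) (h1 : s 1 = 1)
    (n : ℤ) : s (n + 2) * s n - s (n + 1) ^ 2 = -1 := by
  simp [hs.casoratian_eq, h0, h1]

theorem product_identity_at_one (hs : SolvesChebyshevRec c s) (h0 : s 0 = 0) (h1 : s 1 = 1)
    (i j : ℤ) : s i * s (i + 1 + j) + s j = s (i + j) * s (i + 1) := by
  have in_j : (fun j => s i * s (j + (i + 1)) + s j) = fun j => s (i + 1) * s (j + i) := by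
    refine eq_of_eq_zero_of_eq_one (((hs.comp_add_right _).const_mul _).add hs)
      ((hs.comp_add_right _).const_mul _) (by simp [h0, mul_comm]) ?_
    have cassini := hs.casoratian_eq_neg_one h0 h1 i
    rw [show 1 + (i + 1) = i + 2 by ring, add_comm 1 i, h1]
    linear_combination cassini
  simpa only [add_comm _ j, mul_comm (s (i + 1))] using congrFun in_j j

theorem product_identity (hs : SolvesChebyshevRec c s) (h0 : s 0 = 0) (h1 : s 1 = 1)
    (n i j : ℤ) : s i * s (n + i + j) + s j * s n = s (i + j) * s (n + i) := by
  have in_n : (fun n => s i * s (n + (i + j)) + s j * s n) = fun n => s (i + j) * s (n + i) := by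
    refine eq_of_eq_zero_of_eq_one (((hs.comp_add_right _).const_mul _).add (hs.const_mul _))
      ((hs.comp_add_right _).const_mul _) (by simp [h0, mul_comm]) ?_
    rw [show 1 + (i + j) = i + 1 + j by ring, add_comm 1 i, h1, mul_one]
    exact hs.product_identity_at_one h0 h1 i j
  simpa only [add_assoc] using congrFun in_n n

end SolvesChebyshevRec

/-- For all `n, i, j ∈ ℤ` and all `a ∈ ℝ`,
`U_i(a) U_{n+i+j}(a) + U_j(a) U_n(a) = U_{i+j}(a) U_{n+i}(a)` for the (shifted) Chebyshev
polynomials of the second kind. -/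
theorem chebyshevU_product_identity
    (U : ℤ → ℝ → ℝ) (hU0 : ∀ x : ℝ, U 0 x = 0) (hU1 : ∀ x : ℝ, U 1 x = 1)
    (hUrec : ∀ (n : ℤ) (x : ℝ), U (n + 2) x = 2 * x * U (n + 1) x - U n x) :
    ∀ (n i j : ℤ) (a : ℝ),
      U i a * U (n + i + j) a + U j a * U n a = U (i + j) a * U (n + i) a :=
  fun n i j a =>
    SolvesChebyshevRec.product_identity (s := (U · a)) (hUrec · a) (hU0 a) (hU1 a) n i j
end
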